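/- arXiv:1708.02556 — 4 statements merged into one kernel-verified Lean document; each statement's English description precedes it below -/
import Mathlib

section
/- Let (X, μ) be a σ-finite measure space and let p, q : X → [0,∞) be measurable with ∫ p dμ = ∫ q dμ = 1. Then for every measurable function D : X → (0,1), assuming all integrals below are well defined, ∫ p(x) log D(x) dμ(x) + ∫ q(x) log(1 − D(x)) dμ(x) ≤ ∫_{p+q>0} p(x) log (p(x)/(p(x)+q(x))) dμ(x) + ∫_{p+q>0} q(x) log (q(x)/(p(x)+q(x))) dμ(x), and the bound is attained by D*(x) = p(x)/(p(x)+q(x)) on the set where p(x)+q(x) > 0. (Here 0·log 0 is interpreted as 0.) -/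
/-!
Pointwise, `t ↦ a log t + b log (1 - t)` is maximised on `(0,1)` at `t = a / (a + b)`; this is the
binary Gibbs inequality, a consequence of `log y ≤ y - 1`. Where `p + q = 0` both densities vanish,
so the set integrals over `{p + q > 0}` are whole-space integrals and the bound follows by
integrating the pointwise one.
-/

open MeasureTheory Real

lemma mul_log_le_mul_log_div_add_sub {c s m : ℝ} (hc : 0 ≤ c) (hs : 0 < s) (hm : 0 < m) :
    c * log s ≤ c * log (c / m) + (s * m - c) := by
  rcases hc.eq_or_lt with rfl | hc
  · simpa using (mul_pos hs hm).le
  have hlog : log (s * m / c) ≤ s * m / c - 1 := log_le_sub_one_of_pos (by positivity)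
  rw [log_div (by positivity) hc.ne', log_mul hs.ne' hm.ne'] at hlog
  have hscaled := mul_le_mul_of_nonneg_left hlog hc.le
  rw [mul_sub_one, mul_div_cancel₀ _ hc.ne'] at hscaled
  rw [log_div hc.ne' hm.ne']
  linarith

lemma mul_log_add_mul_log_one_sub_le {a b t : ℝ} (ha : 0 ≤ a) (hb : 0 ≤ b) (ht0 : 0 < t)
    (ht1 : t < 1) :
    a * log t + b * log (1 - t) ≤ a * log (a / (a + b)) + b * log (b / (a + b)) := by
  rcases (add_nonneg ha hb).eq_or_lt with hab | hab
  · obtain ⟨rfl, rfl⟩ : a = 0 ∧ b = 0 := ⟨by linarith, by linarith⟩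
    simp
  have ha' := mul_log_le_mul_log_div_add_sub ha ht0 hab
  have hb' := mul_log_le_mul_log_div_add_sub hb (sub_pos.2 ht1) hab
  linarith

lemma mul_log_one_sub_div_add {a b : ℝ} (ha : 0 ≤ a) (hb : 0 ≤ b) :
    b * log (1 - a / (a + b)) = b * log (b / (a + b)) := by
  rcases (add_nonneg ha hb).eq_or_lt with hab | hab
  · obtain rfl : b = 0 := by linarith
    simp
  rw [one_sub_div hab.ne', add_sub_cancel_left]

theorem optimal_discriminator_general
    {X : Type*} [MeasurableSpace X] (μ : Measure X)
    (p q : X → ℝ)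
    (hp0 : ∀ x, 0 ≤ p x) (hq0 : ∀ x, 0 ≤ q x)
    (D : X → ℝ)
    (hD0 : ∀ x, 0 < D x) (hD1 : ∀ x, D x < 1)
    (hIntD1 : Integrable (fun x => p x * Real.log (D x)) μ)
    (hIntD2 : Integrable (fun x => q x * Real.log (1 - D x)) μ)
    (hIntS1 : IntegrableOn (fun x => p x * Real.log (p x / (p x + q x)))
      {x | 0 < p x + q x} μ)
    (hIntS2 : IntegrableOn (fun x => q x * Real.log (q x / (p x + q x)))
      {x | 0 < p x + q x} μ) :
    (∫ x, p x * Real.log (D x) ∂μ) + (∫ x, q x * Real.log (1 - D x) ∂μ)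
      ≤ (∫ x in {x | 0 < p x + q x}, p x * Real.log (p x / (p x + q x)) ∂μ)
        + (∫ x in {x | 0 < p x + q x}, q x * Real.log (q x / (p x + q x)) ∂μ) ∧
    (∫ x, p x * Real.log (p x / (p x + q x)) ∂μ)
        + (∫ x, q x * Real.log (1 - p x / (p x + q x)) ∂μ)
      = (∫ x in {x | 0 < p x + q x}, p x * Real.log (p x / (p x + q x)) ∂μ)
        + (∫ x in {x | 0 < p x + q x}, q x * Real.log (q x / (p x + q x)) ∂μ) := by
  have hvanish : ∀ x, x ∉ {x | 0 < p x + q x} → p x = 0 ∧ q x = 0 := fun x hx => by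
    simp only [Set.mem_ofPred_eq, not_lt] at hx
    exact ⟨by linarith [hp0 x, hq0 x], by linarith [hp0 x, hq0 x]⟩
  have hS1 := hIntS1.integrable_of_forall_notMem_eq_zero fun x hx => by simp [(hvanish x hx).1]
  have hS2 := hIntS2.integrable_of_forall_notMem_eq_zero fun x hx => by simp [(hvanish x hx).2]
  rw [setIntegral_eq_integral_of_forall_compl_eq_zero fun x hx => by simp [(hvanish x hx).1],
    setIntegral_eq_integral_of_forall_compl_eq_zero fun x hx => by simp [(hvanish x hx).2]]
  refine ⟨?_, by simp_rw [mul_log_one_sub_div_add (hp0 _) (hq0 _)]⟩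
  rw [← integral_add hIntD1 hIntD2, ← integral_add hS1 hS2]
  exact integral_mono (hIntD1.add hIntD2) (hS1.add hS2) fun x =>
    mul_log_add_mul_log_one_sub_le (hp0 x) (hq0 x) (hD0 x) (hD1 x)

/-- Optimal-discriminator half of Proposition 1 of the MGAN paper.
For densities `p` (data) and `q` (model) w.r.t. a σ-finite measure `μ`, every
discriminator `D : X → (0,1)` satisfies
`∫ p * log D ∂μ + ∫ q * log (1 - D) ∂μ
  ≤ ∫_{p+q>0} p * log (p/(p+q)) ∂μ + ∫_{p+q>0} q * log (q/(p+q)) ∂μ`,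
and the bound is attained by `D* = p / (p + q)` on the set where `p + q > 0`
(off this set the integrands vanish, as `0 * log 0` is interpreted as `0`). -/
theorem optimal_discriminator
    {X : Type*} [MeasurableSpace X] (μ : Measure X) [SigmaFinite μ]
    (p q : X → ℝ) (hpm : Measurable p) (hqm : Measurable q)
    (hp0 : ∀ x, 0 ≤ p x) (hq0 : ∀ x, 0 ≤ q x)
    (hpint : Integrable p μ) (hqint : Integrable q μ)
    (hp1 : ∫ x, p x ∂μ = 1) (hq1 : ∫ x, q x ∂μ = 1)
    (D : X → ℝ) (hDm : Measurable D)
    (hD0 : ∀ x, 0 < D x) (hD1 : ∀ x, D x < 1)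
    (hIntD1 : Integrable (fun x => p x * Real.log (D x)) μ)
    (hIntD2 : Integrable (fun x => q x * Real.log (1 - D x)) μ)
    (hIntS1 : IntegrableOn (fun x => p x * Real.log (p x / (p x + q x)))
      {x | 0 < p x + q x} μ)
    (hIntS2 : IntegrableOn (fun x => q x * Real.log (q x / (p x + q x)))
      {x | 0 < p x + q x} μ) :
    (∫ x, p x * Real.log (D x) ∂μ) + (∫ x, q x * Real.log (1 - D x) ∂μ)
      ≤ (∫ x in {x | 0 < p x + q x}, p x * Real.log (p x / (p x + q x)) ∂μ)
        + (∫ x in {x | 0 < p x + q x}, q x * Real.log (q x / (p x + q x)) ∂μ) ∧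
    (∫ x, p x * Real.log (p x / (p x + q x)) ∂μ)
        + (∫ x, q x * Real.log (1 - p x / (p x + q x)) ∂μ)
      = (∫ x in {x | 0 < p x + q x}, p x * Real.log (p x / (p x + q x)) ∂μ)
        + (∫ x in {x | 0 < p x + q x}, q x * Real.log (q x / (p x + q x)) ∂μ) :=
  optimal_discriminator_general μ p q hp0 hq0 D hD0 hD1 hIntD1 hIntD2 hIntS1 hIntS2
end

section
/- Let (X, μ) be a σ-finite measure space, let K ≥ 1, let π₁, …, π_K > 0 with Σ_k π_k = 1, let β > 0, let p_data : X → [0,∞) and p₁, …, p_K : X → [0,∞) be measurable densities (each integrating to 1 w.r.t. μ). Write p_model(x) = Σ_j π_j p_j(x), let P_data, P_model, P_k denote the corresponding probability measures, M = ½(P_data + P_model), JSD(P_data‖P_model) = ½KL(P_data‖M) + ½KL(P_model‖M), and JSD_π(p₁,…,p_K) = Σ_k π_k KL(P_k‖P_model). Then, assuming all the divergences and integrals involved are finite, the value of the MGAN objective at the optimal classifier and discriminator, L := ∫_{p_data+p_model>0} p_data log (p_data/(p_data+p_model)) dμ + ∫_{p_data+p_model>0} p_model log (p_model/(p_data+p_model))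 dμ − β·Σ_k π_k ∫_{p_model>0} p_k log (π_k p_k/p_model) dμ, satisfies L = 2·JSD(P_data‖P_model) − β·JSD_π(p₁,…,p_K) − log 4 − β·Σ_k π_k log π_k. -/
open MeasureTheory

/-- Kullback–Leibler divergence `KL(P‖Q) = ∫ log (dP/dQ) dP`. -/
noncomputable def KLdiv {X : Type*} [MeasurableSpace X] (P Q : Measure X) : ℝ :=
  ∫ x, MeasureTheory.llr P Q x ∂P

/-- Jensen–Shannon divergence
`JSD(P‖Q) = ½ KL(P‖M) + ½ KL(Q‖M)` where `M = ½ (P + Q)`. -/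
noncomputable def JSDiv {X : Type*} [MeasurableSpace X] (P Q : Measure X) : ℝ :=
  (KLdiv P ((2 : ENNReal)⁻¹ • (P + Q)) + KLdiv Q ((2 : ENNReal)⁻¹ • (P + Q))) / 2

/-! With densities `f`, `g` (and `f = 0` wherever `g = 0`), `KL(f‖g) = ∫ f log (f / g)`.
Each integrand of the objective is of the form `f log (c f / g)` with `g` the density of the
reference measure: `c = ½, g = (p_data + p_model) / 2` for the two discriminator terms and
`c = π_k, g = p_model` for the classifier terms. Since `∫ f = 1`, each integral equals the
corresponding KL divergence plus `log c`, and the restriction to `{g > 0}` changes nothing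
because `f` vanishes off it. Collecting the constants gives `-log 4 - β Σ π_k log π_k`. -/

open Real

section

variable {X : Type*} [MeasurableSpace X] {μ : Measure X}

theorem klDiv_withDensity_ofReal {f g : X → ℝ} (hf : Measurable f) (hg : Measurable g)
    (hf0 : ∀ x, 0 ≤ f x) (hg0 : ∀ x, 0 ≤ g x) (hfg : ∀ x, g x = 0 → f x = 0)
    (hgi : Integrable g μ) :
    KLdiv (μ.withDensity fun x => ENNReal.ofReal (f x))
        (μ.withDensity fun x => ENNReal.ofReal (g x))
      = ∫ x, f x * log (f x / g x) ∂μ := by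
  set F : X → ENNReal := fun x => ENNReal.ofReal (f x)
  set G : X → ENNReal := fun x => ENNReal.ofReal (g x)
  have hFm : Measurable F := hf.ennreal_ofReal
  have hGm : Measurable G := hg.ennreal_ofReal
  have : IsFiniteMeasure (μ.withDensity G) := isFiniteMeasure_withDensity_ofReal hgi.2
  have hGF : (μ.withDensity G).withDensity (F / G) = μ.withDensity F := by
    rw [← withDensity_mul μ hGm (hFm.div hGm)]
    congr 1
    funext x
    by_cases hx : g x = 0
    · simp [F, G, hx, hfg x hx]
    · exact ENNReal.mul_div_cancel (by simpa [G] using lt_of_le_of_ne (hg0 x) (Ne.symm hx))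
        ENNReal.ofReal_ne_top
  have hllr : ∀ᵐ x ∂μ, F x ≠ 0 →
      llr (μ.withDensity F) (μ.withDensity G) x = log (f x / g x) := by
    rw [← ae_withDensity_iff hFm, ← hGF]
    filter_upwards [(withDensity_absolutelyContinuous _ _).ae_le
      (Measure.rnDeriv_withDensity (μ.withDensity G) (hFm.div hGm))] with x hx
    simp [llr_def, hx, F, G, ENNReal.toReal_div, ENNReal.toReal_ofReal (hf0 x),
      ENNReal.toReal_ofReal (hg0 x)]
  rw [KLdiv, integral_withDensity_eq_integral_toReal_smul hFm
    (ae_of_all _ fun _ => ENNReal.ofReal_lt_top)]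
  refine integral_congr_ae ?_
  filter_upwards [hllr] with x hx
  by_cases hfx : f x = 0
  · simp [F, hfx]
  · rw [hx (by simpa [F] using lt_of_le_of_ne (hf0 x) (Ne.symm hfx)), smul_eq_mul,
      ENNReal.toReal_ofReal (hf0 x)]

theorem mul_log_const_mul_div {a b c : ℝ} (hc : c ≠ 0) (hab : b = 0 → a = 0) :
    a * log (c * a / b) = a * log (a / b) + log c * a := by
  rcases eq_or_ne a 0 with rfl | ha
  · simp
  · have hb : b ≠ 0 := fun hb => ha (hab hb)
    rw [mul_div_assoc, log_mul hc (div_ne_zero ha hb)]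
    ring

theorem integral_mul_log_const_mul_div_eq_klDiv {f g : X → ℝ} {c : ℝ} (hc : c ≠ 0)
    (hf : Measurable f) (hg : Measurable g) (hf0 : ∀ x, 0 ≤ f x) (hg0 : ∀ x, 0 ≤ g x)
    (hfg : ∀ x, g x = 0 → f x = 0) (hfi : Integrable f μ) (hgi : Integrable g μ)
    (hf1 : ∫ x, f x ∂μ = 1) (hi : Integrable (fun x => f x * log (c * f x / g x)) μ) :
    ∫ x, f x * log (c * f x / g x) ∂μ
      = KLdiv (μ.withDensity fun x => ENNReal.ofReal (f x))
          (μ.withDensity fun x => ENNReal.ofReal (g x)) + log c := by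
  have hpt (x : X) := mul_log_const_mul_div hc (hfg x)
  have hi' : Integrable (fun x => f x * log (f x / g x)) μ :=
    (integrable_add_iff_integrable_left' (hfi.const_mul (log c))).mp
      (by simpa only [hpt] using hi)
  simp only [hpt]
  rw [integral_add hi' (hfi.const_mul _), integral_const_mul, hf1, mul_one,
    klDiv_withDensity_ofReal hf hg hf0 hg0 hfg hgi]

theorem setIntegral_mul_log_const_mul_div_eq_klDiv {f g : X → ℝ} {c : ℝ} {s : Set X}
    (hc : c ≠ 0) (hf : Measurable f) (hg : Measurable g) (hf0 : ∀ x, 0 ≤ f x)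
    (hg0 : ∀ x, 0 ≤ g x) (hfg : ∀ x, g x = 0 → f x = 0) (hfi : Integrable f μ)
    (hgi : Integrable g μ) (hf1 : ∫ x, f x ∂μ = 1) (hfs : ∀ x ∉ s, f x = 0)
    (hi : IntegrableOn (fun x => f x * log (c * f x / g x)) s μ) :
    ∫ x in s, f x * log (c * f x / g x) ∂μ
      = KLdiv (μ.withDensity fun x => ENNReal.ofReal (f x))
          (μ.withDensity fun x => ENNReal.ofReal (g x)) + log c := by
  have hvanish : ∀ x ∉ s, f x * log (c * f x / g x) = 0 := fun x hx => by simp [hfs x hx]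
  rw [setIntegral_eq_integral_of_forall_compl_eq_zero hvanish]
  exact integral_mul_log_const_mul_div_eq_klDiv hc hf hg hf0 hg0 hfg hfi hgi hf1
    (hi.integrable_of_forall_notMem_eq_zero hvanish)

theorem withDensity_ofReal_midpoint {f g : X → ℝ} (hf : Measurable f)
    (hf0 : ∀ x, 0 ≤ f x) (hg0 : ∀ x, 0 ≤ g x) :
    (2 : ENNReal)⁻¹ • (μ.withDensity (fun x => ENNReal.ofReal (f x))
        + μ.withDensity fun x => ENNReal.ofReal (g x))
      = μ.withDensity fun x => ENNReal.ofReal ((f x + g x) / 2) := by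
  rw [← withDensity_add_left hf.ennreal_ofReal, ← withDensity_smul' _ _ (by simp)]
  congr 1
  funext x
  rw [Pi.smul_apply, Pi.add_apply, smul_eq_mul, ← ENNReal.ofReal_add (hf0 x) (hg0 x),
    ENNReal.ofReal_div_of_pos two_pos, ENNReal.div_eq_inv_mul, ENNReal.ofReal_ofNat]

theorem setIntegral_mul_log_div_add_eq_klDiv_midpoint {f g : X → ℝ} (hf : Measurable f)
    (hg : Measurable g) (hf0 : ∀ x, 0 ≤ f x) (hg0 : ∀ x, 0 ≤ g x) (hfi : Integrable f μ)
    (hgi : Integrable g μ) (hf1 : ∫ x, f x ∂μ = 1)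
    (hi : IntegrableOn (fun x => f x * log (f x / (f x + g x))) {x | 0 < f x + g x} μ) :
    ∫ x in {x | 0 < f x + g x}, f x * log (f x / (f x + g x)) ∂μ
      = KLdiv (μ.withDensity fun x => ENNReal.ofReal (f x))
          ((2 : ENNReal)⁻¹ • (μ.withDensity (fun x => ENNReal.ofReal (f x))
            + μ.withDensity fun x => ENNReal.ofReal (g x))) - log 2 := by
  have hhalf (x : X) : f x / (f x + g x) = 2⁻¹ * f x / ((f x + g x) / 2) := by
    rw [div_div_eq_mul_div]; ring
  simp only [hhalf] at hi ⊢
  rw [withDensity_ofReal_midpoint hf hf0 hg0, sub_eq_add_neg, ← log_inv]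
  refine setIntegral_mul_log_const_mul_div_eq_klDiv (by norm_num) hf
    ((hf.add hg).div_const 2) hf0 (fun x => by linarith [hf0 x, hg0 x]) (fun x hx => ?_)
    hfi ((hfi.add hgi).div_const 2) hf1 (fun x (hx : ¬ 0 < f x + g x) => ?_) hi
  · linarith [hf0 x, hg0 x]
  · linarith [not_lt.mp hx, hf0 x, hg0 x]

end

theorem eq_zero_of_sum_mul_eq_zero {ι : Type*} [Fintype ι] {w a : ι → ℝ}
    (hw : ∀ i, 0 < w i) (ha : ∀ i, 0 ≤ a i) (h : ∑ i, w i * a i = 0) (k : ι) : a k = 0 :=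
  (mul_eq_zero.mp ((Finset.sum_eq_zero_iff_of_nonneg fun i _ => mul_nonneg (hw i).le (ha i)).mp
    h k (Finset.mem_univ k))).resolve_left (hw k).ne'

theorem mgan_objective_eq_general
    {X : Type*} [MeasurableSpace X] (μ : Measure X)
    (K : ℕ)
    (w : Fin K → ℝ) (hw : ∀ k, 0 < w k) (hw1 : ∑ k, w k = 1)
    (beta : ℝ)
    (pdata : X → ℝ) (hdm : Measurable pdata) (hd0 : ∀ x, 0 ≤ pdata x)
    (hdint : Integrable pdata μ) (hd1 : ∫ x, pdata x ∂μ = 1)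
    (p : Fin K → X → ℝ)
    (hpm : ∀ k, Measurable (p k)) (hp0 : ∀ k x, 0 ≤ p k x)
    (hpint : ∀ k, Integrable (p k) μ) (hp1 : ∀ k, ∫ x, p k x ∂μ = 1)
    (pmodel : X → ℝ) (hpmodel : ∀ x, pmodel x = ∑ j, w j * p j x)
    (Pdata Pmodel M : Measure X) (Pgen : Fin K → Measure X)
    (hPdata : Pdata = μ.withDensity fun x => ENNReal.ofReal (pdata x))
    (hPmodel : Pmodel = μ.withDensity fun x => ENNReal.ofReal (pmodel x))
    (hM : M = (2 : ENNReal)⁻¹ • (Pdata + Pmodel))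
    (hPgen : ∀ k, Pgen k = μ.withDensity fun x => ENNReal.ofReal (p k x))
    (hIntS1 : IntegrableOn
      (fun x => pdata x * Real.log (pdata x / (pdata x + pmodel x)))
      {x | 0 < pdata x + pmodel x} μ)
    (hIntS2 : IntegrableOn
      (fun x => pmodel x * Real.log (pmodel x / (pdata x + pmodel x)))
      {x | 0 < pdata x + pmodel x} μ)
    (hIntS3 : ∀ k, IntegrableOn
      (fun x => p k x * Real.log (w k * p k x / pmodel x))
      {x | 0 < pmodel x} μ) :
    (∫ x in {x | 0 < pdata x + pmodel x},
        pdata x * Real.log (pdata x / (pdata x + pmodel x)) ∂μ)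
      + (∫ x in {x | 0 < pdata x + pmodel x},
          pmodel x * Real.log (pmodel x / (pdata x + pmodel x)) ∂μ)
      - beta * ∑ k, w k * ∫ x in {x | 0 < pmodel x},
          p k x * Real.log (w k * p k x / pmodel x) ∂μ
    = 2 * JSDiv Pdata Pmodel - beta * (∑ k, w k * KLdiv (Pgen k) Pmodel)
      - Real.log 4 - beta * ∑ k, w k * Real.log (w k) := by
  have hmix : pmodel = fun x => ∑ j, w j * p j x := funext hpmodel
  have hmm : Measurable pmodel := hmix ▸ Finset.measurable_sum _ fun j _ => (hpm j).const_mul _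
  have hm0 (x : X) : 0 ≤ pmodel x :=
    hpmodel x ▸ Finset.sum_nonneg fun j _ => mul_nonneg (hw j).le (hp0 j x)
  have hmint : Integrable pmodel μ :=
    hmix ▸ integrable_finsetSum _ fun j _ => (hpint j).const_mul _
  have hm1 : ∫ x, pmodel x ∂μ = 1 := by
    rw [hmix, integral_finsetSum _ fun j _ => (hpint j).const_mul _]
    simp [integral_const_mul, hp1, hw1]
  have hdata :=
    setIntegral_mul_log_div_add_eq_klDiv_midpoint hdm hmm hd0 hm0 hdint hmint hd1 hIntS1
  have hmodel := setIntegral_mul_log_div_add_eq_klDiv_midpoint hmm hdm hm0 hd0 hmint hdint hm1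
    (by simpa only [add_comm] using hIntS2)
  have hgen (k : Fin K) :
      ∫ x in {x | 0 < pmodel x}, p k x * log (w k * p k x / pmodel x) ∂μ
          = KLdiv (Pgen k) Pmodel + log (w k) := by
    have hsupp (x : X) (hx : pmodel x = 0) : p k x = 0 :=
      eq_zero_of_sum_mul_eq_zero hw (fun j => hp0 j x) (hpmodel x ▸ hx) k
    rw [hPgen, hPmodel]
    exact setIntegral_mul_log_const_mul_div_eq_klDiv (hw k).ne' (hpm k) hmm (hp0 k) hm0 hsupp
      (hpint k) hmint (hp1 k) (fun x hx => hsupp x (le_antisymm (not_lt.mp hx) (hm0 x)))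
      (hIntS3 k)
  simp only [add_comm (pmodel _), add_comm (μ.withDensity fun x => ENNReal.ofReal (pmodel x))]
    at hmodel
  rw [← hPdata, ← hPmodel, ← hM] at hdata hmodel
  rw [hdata, hmodel, Finset.sum_congr rfl fun k _ => by rw [hgen k], JSDiv, ← hM,
    show (4 : ℝ) = 2 ^ 2 by norm_num, log_pow]
  simp only [mul_add, Finset.sum_add_distrib]
  push_cast
  ring

/-- Theorem 1 of the MGAN paper: the value of the MGAN objective at the
optimal classifier and discriminator,
`L = ∫_{pdata+pmodel>0} pdata log (pdata/(pdata+pmodel))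
   + ∫_{pdata+pmodel>0} pmodel log (pmodel/(pdata+pmodel))
   - β ∑ k, w k ∫_{pmodel>0} p k log (w k p k / pmodel)`,
satisfies `L = 2 JSD(P_data‖P_model) - β JSD_w(p 1,…,p K) - log 4
             - β ∑ k, w k log (w k)`,
where `JSD_w(p 1,…,p K) = ∑ k, w k * KL(P_k‖P_model)`, all measures being
the probability measures with the indicated densities w.r.t. the σ-finite
measure `μ`, and all divergences and integrals involved are assumed finite. -/
theorem mgan_objective_eq
    {X : Type*} [MeasurableSpace X] (μ : Measure X) [SigmaFinite μ]
    (K : ℕ) (hK : 1 ≤ K)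
    (w : Fin K → ℝ) (hw : ∀ k, 0 < w k) (hw1 : ∑ k, w k = 1)
    (beta : ℝ) (hbeta : 0 < beta)
    (pdata : X → ℝ) (hdm : Measurable pdata) (hd0 : ∀ x, 0 ≤ pdata x)
    (hdint : Integrable pdata μ) (hd1 : ∫ x, pdata x ∂μ = 1)
    (p : Fin K → X → ℝ)
    (hpm : ∀ k, Measurable (p k)) (hp0 : ∀ k x, 0 ≤ p k x)
    (hpint : ∀ k, Integrable (p k) μ) (hp1 : ∀ k, ∫ x, p k x ∂μ = 1)
    (pmodel : X → ℝ) (hpmodel : ∀ x, pmodel x = ∑ j, w j * p j x)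
    (Pdata Pmodel M : Measure X) (Pgen : Fin K → Measure X)
    (hPdata : Pdata = μ.withDensity fun x => ENNReal.ofReal (pdata x))
    (hPmodel : Pmodel = μ.withDensity fun x => ENNReal.ofReal (pmodel x))
    (hM : M = (2 : ENNReal)⁻¹ • (Pdata + Pmodel))
    (hPgen : ∀ k, Pgen k = μ.withDensity fun x => ENNReal.ofReal (p k x))
    (hfin1 : Integrable (MeasureTheory.llr Pdata M) Pdata)
    (hfin2 : Integrable (MeasureTheory.llr Pmodel M) Pmodel)
    (hfin3 : ∀ k, Integrable (MeasureTheory.llr (Pgen k) Pmodel) (Pgen k))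
    (hIntS1 : IntegrableOn
      (fun x => pdata x * Real.log (pdata x / (pdata x + pmodel x)))
      {x | 0 < pdata x + pmodel x} μ)
    (hIntS2 : IntegrableOn
      (fun x => pmodel x * Real.log (pmodel x / (pdata x + pmodel x)))
      {x | 0 < pdata x + pmodel x} μ)
    (hIntS3 : ∀ k, IntegrableOn
      (fun x => p k x * Real.log (w k * p k x / pmodel x))
      {x | 0 < pmodel x} μ) :
    (∫ x in {x | 0 < pdata x + pmodel x},
        pdata x * Real.log (pdata x / (pdata x + pmodel x)) ∂μ)
      + (∫ x in {x | 0 < pdata x + pmodel x},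
          pmodel x * Real.log (pmodel x / (pdata x + pmodel x)) ∂μ)
      - beta * ∑ k, w k * ∫ x in {x | 0 < pmodel x},
          p k x * Real.log (w k * p k x / pmodel x) ∂μ
    = 2 * JSDiv Pdata Pmodel - beta * (∑ k, w k * KLdiv (Pgen k) Pmodel)
      - Real.log 4 - beta * ∑ k, w k * Real.log (w k) :=
  mgan_objective_eq_general μ K w hw hw1 beta pdata hdm hd0 hdint hd1 p hpm hp0 hpint hp1 pmodel
    hpmodel Pdata Pmodel M Pgen hPdata hPmodel hM hPgen hIntS1 hIntS2 hIntS3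
end

section
/- Let (X, μ) be a σ-finite measure space, let K ≥ 1, let π₁, …, π_K > 0 with Σ_k π_k = 1, and let p₁, …, p_K : X → [0,∞) be measurable with ∫ p_k dμ = 1 for each k. Write p_mix(x) = Σ_j π_j p_j(x) and JSD_π(p₁,…,p_K) = Σ_k π_k ∫_{p_mix>0} p_k(x) log (p_k(x)/p_mix(x)) dμ(x). Then JSD_π(p₁,…,p_K) = Σ_k π_k log(1/π_k) if and only if the densities are well-separated, i.e., for every k and for μ-almost every x, p_k(x) > 0 implies p_j(x) = 0 for all j ≠ k. -/
open MeasureTheory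

/-- Equality characterization at the core of Theorem 2 of the MGAN paper:
for densities `p 1, …, p K` with weights `w k > 0`, `∑ k, w k = 1`, and
mixture `pmix = ∑ j, w j * p j`, the generalized Jensen–Shannon divergence
`JSD_w(p 1,…,p K) = ∑ k, w k * ∫_{pmix>0} p k * log (p k / pmix) ∂μ`
equals the Shannon entropy `H(w) = ∑ k, w k * log (1 / w k)` if and only if
the densities are well-separated: for every `k` and `μ`-almost every `x`,
`p k x > 0` implies `p j x = 0` for all `j ≠ k`. -/
theorem jsd_eq_entropy_iff_well_separated
    {X : Type*} [MeasurableSpace X] (μ : Measure X) [SigmaFinite μ]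
    (K : ℕ) (hK : 1 ≤ K)
    (w : Fin K → ℝ) (hw : ∀ k, 0 < w k) (hw1 : ∑ k, w k = 1)
    (p : Fin K → X → ℝ)
    (hpm : ∀ k, Measurable (p k)) (hp0 : ∀ k x, 0 ≤ p k x)
    (hpint : ∀ k, Integrable (p k) μ) (hp1 : ∀ k, ∫ x, p k x ∂μ = 1)
    (pmix : X → ℝ) (hpmix : ∀ x, pmix x = ∑ j, w j * p j x) :
    (∑ k, w k * ∫ x in {x | 0 < pmix x},
        p k x * Real.log (p k x / pmix x) ∂μ)
      = ∑ k, w k * Real.log (1 / w k)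
    ↔ ∀ k, ∀ᵐ x ∂μ, 0 < p k x → ∀ j, j ≠ k → p j x = 0 := by
  classical
  set S : Set X := {x | 0 < pmix x} with hS_def
  -- basic facts about pmix
  have hqm : Measurable pmix := by
    have : pmix = fun x => ∑ j, w j * p j x := funext hpmix
    rw [this]
    exact Finset.measurable_sum _ fun j _ => (hpm j).const_mul _
  have hle : ∀ k x, w k * p k x ≤ pmix x := by
    intro k x
    rw [hpmix]
    exact Finset.single_le_sum
      (fun j _ => mul_nonneg (hw j).le (hp0 j x)) (Finset.mem_univ k)
  have hq0 : ∀ x, 0 ≤ pmix x := by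
    intro x
    rw [hpmix]
    exact Finset.sum_nonneg fun j _ => mul_nonneg (hw j).le (hp0 j x)
  have hS : MeasurableSet S := measurableSet_lt measurable_const hqm
  -- p k vanishes outside S
  have hpS : ∀ k x, x ∉ S → p k x = 0 := by
    intro k x hx
    have h1 : pmix x ≤ 0 := le_of_not_gt hx
    have h2 : w k * p k x ≤ 0 := (hle k x).trans h1
    have h3 : 0 ≤ w k * p k x := mul_nonneg (hw k).le (hp0 k x)
    have := le_antisymm h2 h3
    have := mul_eq_zero.mp this
    rcases this with h | h
    · exact absurd h (ne_of_gt (hw k))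
    · exact h
  -- weights are at most 1
  have hwle1 : ∀ k, w k ≤ 1 := by
    intro k
    calc w k ≤ ∑ j, w j :=
          Finset.single_le_sum (fun j _ => (hw j).le) (Finset.mem_univ k)
      _ = 1 := hw1
  have hlogw : ∀ k, 0 ≤ Real.log (1 / w k) := fun k =>
    Real.log_nonneg (one_le_one_div (hw k) (hwle1 k))
  -- the key pointwise bound with equality characterization
  have key : ∀ k x, x ∈ S →
      (p k x * Real.log (p k x / pmix x) ≤ p k x * Real.log (1 / w k)
       ∧ (p k x * Real.log (p k x / pmix x) = p k x * Real.log (1 / w k) ↔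
          (0 < p k x → ∀ j, j ≠ k → p j x = 0))) := by
    intro k x hx
    have hxq : 0 < pmix x := hx
    rcases eq_or_lt_of_le (hp0 k x) with h0 | h0
    · constructor
      · rw [← h0]; simp
      · rw [← h0]; simp
    · have hdivpos : 0 < p k x / pmix x := div_pos h0 hxq
      have hdivle : p k x / pmix x ≤ 1 / w k := by
        rw [div_le_div_iff₀ hxq (hw k)]
        calc p k x * w k = w k * p k x := mul_comm _ _
          _ ≤ pmix x := hle k x
          _ = 1 * pmix x := (one_mul _).symm
      have hlogle : Real.log (p k x / pmix x) ≤ Real.log (1 / w k) :=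
        Real.log_le_log hdivpos hdivle
      refine ⟨mul_le_mul_of_nonneg_left hlogle (hp0 k x), ?_, ?_⟩
      · intro heq _ j hjk
        have hlogeq : Real.log (p k x / pmix x) = Real.log (1 / w k) :=
          mul_left_cancel₀ (ne_of_gt h0) heq
        have hdeq : p k x / pmix x = 1 / w k := by
          have h1 : Real.exp (Real.log (p k x / pmix x)) = p k x / pmix x :=
            Real.exp_log hdivpos
          have h2 : Real.exp (Real.log (1 / w k)) = 1 / w k :=
            Real.exp_log (one_div_pos.mpr (hw k))
          rw [← h1, ← h2, hlogeq]
        have hqeq : pmix x = w k * p k x := by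
          rw [div_eq_div_iff hxq.ne' (hw k).ne', one_mul, mul_comm] at hdeq
          exact hdeq.symm
        -- the remaining terms of the sum vanish
        have hsum : ∑ j ∈ Finset.univ.erase k, w j * p j x = 0 := by
          have h3 : ∑ j ∈ Finset.univ.erase k, w j * p j x + w k * p k x
              = ∑ j, w j * p j x :=
            Finset.sum_erase_add _ _ (Finset.mem_univ k)
          have h4 : ∑ j, w j * p j x = w k * p k x := by rw [← hpmix, hqeq]
          linarith
        have h5 := (Finset.sum_eq_zero_iff_of_nonneg
          (fun j _ => mul_nonneg (hw j).le (hp0 j x))).mp hsum j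
          (Finset.mem_erase.mpr ⟨hjk, Finset.mem_univ j⟩)
        rcases mul_eq_zero.mp h5 with h | h
        · exact absurd h (ne_of_gt (hw j))
        · exact h
      · intro hsep
        have hall : ∀ j, j ≠ k → p j x = 0 := hsep h0
        have hqeq : pmix x = w k * p k x := by
          rw [hpmix, Finset.sum_eq_single k]
          · intro j _ hjk
            rw [hall j hjk, mul_zero]
          · intro h; exact absurd (Finset.mem_univ k) h
        rw [hqeq]
        congr 1
        rw [mul_comm, ← div_div, div_self (ne_of_gt h0)]
  -- measurability of the integrands
  have hgm : ∀ k, Measurable (fun x => p k x * Real.log (p k x / pmix x)) :=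
    fun k => (hpm k).mul ((hpm k).div hqm).log
  -- lower bound: p k x - pmix x ≤ integrand on S
  have hlow : ∀ k x, x ∈ S →
      p k x - pmix x ≤ p k x * Real.log (p k x / pmix x) := by
    intro k x hx
    have hxq : 0 < pmix x := hx
    rcases eq_or_lt_of_le (hp0 k x) with h0 | h0
    · rw [← h0]; simp; linarith
    · have h1 : Real.log (pmix x / p k x) ≤ pmix x / p k x - 1 :=
        Real.log_le_sub_one_of_pos (div_pos hxq h0)
      have h2 : Real.log (p k x / pmix x) = - Real.log (pmix x / p k x) := by
        rw [← Real.log_inv]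
        congr 1
        field_simp
      have h3 : 1 - pmix x / p k x ≤ Real.log (p k x / pmix x) := by
        rw [h2]; linarith
      have h4 := mul_le_mul_of_nonneg_left h3 (hp0 k x)
      calc p k x - pmix x = p k x * (1 - pmix x / p k x) := by
            field_simp
        _ ≤ p k x * Real.log (p k x / pmix x) := h4
  -- integrability on S
  have hqint : Integrable pmix μ := by
    have : Integrable (fun x => ∑ j, w j * p j x) μ :=
      integrable_finset_sum _ fun j _ => (hpint j).const_mul _
    exact this.congr (Filter.Eventually.of_forall fun x => (hpmix x).symm)
  have hgint : ∀ k,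
      IntegrableOn (fun x => p k x * Real.log (p k x / pmix x)) S μ := by
    intro k
    refine Integrable.mono'
      (g := fun x => p k x * Real.log (1 / w k) + pmix x)
      (((hpint k).mul_const _).add hqint).integrableOn
      ((hgm k).aestronglyMeasurable.restrict) ?_
    rw [ae_restrict_iff' hS]
    refine Filter.Eventually.of_forall fun x hx => ?_
    have hxq : 0 < pmix x := hx
    show ‖p k x * Real.log (p k x / pmix x)‖
      ≤ p k x * Real.log (1 / w k) + pmix x
    rw [Real.norm_eq_abs, abs_le]
    constructor
    · have h1 := hlow k x hx
      have h2 : 0 ≤ p k x * Real.log (1 / w k) :=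
        mul_nonneg (hp0 k x) (hlogw k)
      linarith [hp0 k x]
    · have h1 := (key k x hx).1
      have h2 : 0 ≤ pmix x := hq0 x
      linarith
  -- ∫_S p k = 1
  have hpS1 : ∀ k, ∫ x in S, p k x ∂μ = 1 := by
    intro k
    have hind : S.indicator (p k) = p k := by
      funext x
      by_cases hx : x ∈ S
      · simp [Set.indicator_of_mem hx]
      · simp [Set.indicator_of_notMem hx, hpS k x hx]
    rw [← integral_indicator hS, hind, hp1 k]
  -- the upper-bound integral
  have hupint : ∀ k,
      IntegrableOn (fun x => p k x * Real.log (1 / w k)) S μ :=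
    fun k => ((hpint k).mul_const _).integrableOn
  have hup : ∀ k, ∫ x in S, p k x * Real.log (1 / w k) ∂μ
      = Real.log (1 / w k) := by
    intro k
    rw [integral_mul_const, hpS1 k, one_mul]
  -- termwise inequality
  have hIle : ∀ k, ∫ x in S, p k x * Real.log (p k x / pmix x) ∂μ
      ≤ Real.log (1 / w k) := by
    intro k
    rw [← hup k]
    exact setIntegral_mono_on (hgint k) (hupint k) hS fun x hx => (key k x hx).1
  -- the equality of sums is termwise equality
  rw [show (∑ k, w k * ∫ x in {x | 0 < pmix x},
        p k x * Real.log (p k x / pmix x) ∂μ)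
      = ∑ k, w k * ∫ x in S, p k x * Real.log (p k x / pmix x) ∂μ from rfl]
  rw [Finset.sum_eq_sum_iff_of_le
    (fun k _ => mul_le_mul_of_nonneg_left (hIle k) (hw k).le)]
  constructor
  · intro h k
    have h1 : ∫ x in S, p k x * Real.log (p k x / pmix x) ∂μ
        = Real.log (1 / w k) :=
      mul_left_cancel₀ (ne_of_gt (hw k)) (h k (Finset.mem_univ k))
    -- deduce a.e. equality on S
    have hdiff : ∫ x in S,
        (p k x * Real.log (1 / w k) - p k x * Real.log (p k x / pmix x)) ∂μ
        = 0 := by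
      rw [integral_sub (hupint k) (hgint k), hup k, h1, sub_self]
    have hnn : 0 ≤ᵐ[μ.restrict S] fun x =>
        p k x * Real.log (1 / w k) - p k x * Real.log (p k x / pmix x) := by
      refine (ae_restrict_iff' hS).mpr ?_
      exact Filter.Eventually.of_forall fun x hx =>
        sub_nonneg.mpr (key k x hx).1
    have hae := (integral_eq_zero_iff_of_nonneg_ae hnn
      ((hupint k).sub (hgint k))).mp hdiff
    rw [Filter.EventuallyEq, ae_restrict_iff' hS] at hae
    filter_upwards [hae] with x hx hpk j hjk
    have hxS : x ∈ S := by
      show 0 < pmix x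
      calc (0:ℝ) < w k * p k x := mul_pos (hw k) hpk
        _ ≤ pmix x := hle k x
    have heq : p k x * Real.log (p k x / pmix x)
        = p k x * Real.log (1 / w k) := by
      have h6 : p k x * Real.log (1 / w k)
          - p k x * Real.log (p k x / pmix x) = 0 := hx hxS
      linarith
    exact ((key k x hxS).2.mp heq) hpk j hjk
  · intro h k _
    congr 1
    rw [← hup k]
    refine setIntegral_congr_ae hS ?_
    filter_upwards [h k] with x hx hxS
    exact (key k x hxS).2.mpr hx
end

section
/- Let (X, μ) be a σ-finite measure space, let K ≥ 1, let π₁, …, π_K > 0 with Σ_k π_k = 1, let β ≥ 0, let p_data : X → [0,∞) be a density, and let g₁, …, g_K : X → [0,∞) be any measurable densities (each integrating to 1 w.r.t. μ). Write g_mix(x) = Σ_j π_j g_j(x), let P_data and P_mix be the corresponding probability measures, M = ½(P_data + P_mix), JSD(P_data‖P_mix) = ½KL(P_data‖M) + ½KL(P_mix‖M), and JSD_π(g₁,…,g_K) = Σ_k π_k ∫_{g_mix>0} g_k log(g_k/g_mix) dμ. Then 2·JSD(P_data‖P_mix) − β·JSD_π(g₁,…,g_K) ≥ −β·Σ_k π_k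 log(1/π_k). -/
open MeasureTheory

lemma KLdiv_nonneg_aux {X : Type*} [MeasurableSpace X] (P M : Measure X)
    [IsProbabilityMeasure P] [IsProbabilityMeasure M] (hPM : P ≪ M) :
    0 ≤ KLdiv P M := by
  unfold KLdiv
  by_cases hint : Integrable (llr P M) P
  · rw [← neg_nonpos, ← integral_neg]
    have h1 : ∀ᵐ x ∂P, -llr P M x ≤ (M.rnDeriv P x).toReal - 1 := by
      filter_upwards [neg_llr hPM, Measure.rnDeriv_pos' hPM, Measure.rnDeriv_lt_top M P]
        with x hx hpos hlt
      rw [Pi.neg_apply] at hx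
      rw [hx]
      exact Real.log_le_sub_one_of_pos (ENNReal.toReal_pos hpos.ne' hlt.ne)
    have h2 : ∫ x, -llr P M x ∂P ≤ ∫ x, ((M.rnDeriv P x).toReal - 1) ∂P := by
      refine integral_mono_ae hint.neg (Measure.integrable_toReal_rnDeriv.sub (integrable_const 1)) h1
    refine h2.trans ?_
    rw [integral_sub Measure.integrable_toReal_rnDeriv (integrable_const 1)]
    have h3 : ∫ x, (M.rnDeriv P x).toReal ∂P ≤ (M Set.univ).toReal := by
      rw [← setIntegral_univ]
      exact Measure.setIntegral_toReal_rnDeriv_le (measure_ne_top M _)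
    simp only [measure_univ, ENNReal.toReal_one] at h3
    have h4 : ∫ _x, (1:ℝ) ∂P = 1 := by simp
    linarith
  · rw [integral_undef hint]


/-- Lower-bound part of Theorem 2 of the MGAN paper: for any data density
`pdata` and any generator densities `g 1, …, g K` with mixture
`gmix = ∑ j, w j * g j` (weights `w k > 0`, `∑ k, w k = 1`) and `β ≥ 0`,
`2 JSD(P_data‖P_mix) - β JSD_w(g 1,…,g K) ≥ -β ∑ k, w k * log (1 / w k)`,
where `P_data`, `P_mix` are the probability measures with densities `pdata`,
`gmix` w.r.t. the σ-finite measure `μ` and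
`JSD_w(g 1,…,g K) = ∑ k, w k * ∫_{gmix>0} g k * log (g k / gmix) ∂μ`. -/
theorem mgan_objective_lower_bound
    {X : Type*} [MeasurableSpace X] (μ : Measure X) [SigmaFinite μ]
    (K : ℕ) (hK : 1 ≤ K)
    (w : Fin K → ℝ) (hw : ∀ k, 0 < w k) (hw1 : ∑ k, w k = 1)
    (beta : ℝ) (hbeta : 0 ≤ beta)
    (pdata : X → ℝ) (hdm : Measurable pdata) (hd0 : ∀ x, 0 ≤ pdata x)
    (hdint : Integrable pdata μ) (hd1 : ∫ x, pdata x ∂μ = 1)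
    (g : Fin K → X → ℝ)
    (hgm : ∀ k, Measurable (g k)) (hg0 : ∀ k x, 0 ≤ g k x)
    (hgint : ∀ k, Integrable (g k) μ) (hg1 : ∀ k, ∫ x, g k x ∂μ = 1)
    (gmix : X → ℝ) (hgmix : ∀ x, gmix x = ∑ j, w j * g j x)
    (Pdata Pmix : Measure X)
    (hPdata : Pdata = μ.withDensity fun x => ENNReal.ofReal (pdata x))
    (hPmix : Pmix = μ.withDensity fun x => ENNReal.ofReal (gmix x)) :
    2 * JSDiv Pdata Pmix
      - beta * (∑ k, w k * ∫ x in {x | 0 < gmix x},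
          g k x * Real.log (g k x / gmix x) ∂μ)
    ≥ -(beta * ∑ k, w k * Real.log (1 / w k)) := by
  -- basic facts about gmix
  have hgmix_meas : Measurable gmix := by
    have : Measurable fun x => ∑ j, w j * g j x :=
      Finset.measurable_sum _ fun j _ => (measurable_const.mul (hgm j))
    simpa [funext hgmix] using this
  have hgmix0 : ∀ x, 0 ≤ gmix x := fun x => by
    rw [hgmix]; exact Finset.sum_nonneg fun j _ => mul_nonneg (hw j).le (hg0 j x)
  have hgmixint : Integrable gmix μ := by
    have : Integrable (fun x => ∑ j, w j * g j x) μ :=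
      integrable_finset_sum _ fun j _ => (hgint j).const_mul _
    simpa [funext hgmix] using this
  have hgmix1 : ∫ x, gmix x ∂μ = 1 := by
    simp only [funext hgmix]
    rw [integral_finset_sum _ fun j _ => (hgint j).const_mul _]
    simp [integral_const_mul, hg1, hw1]
  -- probability measure instances
  have hPdataProb : IsProbabilityMeasure Pdata := by
    constructor
    rw [hPdata, withDensity_apply _ MeasurableSet.univ, setLIntegral_univ,
      ← ofReal_integral_eq_lintegral_ofReal hdint (ae_of_all _ hd0), hd1, ENNReal.ofReal_one]
  have hPmixProb : IsProbabilityMeasure Pmix := by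
    constructor
    rw [hPmix, withDensity_apply _ MeasurableSet.univ, setLIntegral_univ,
      ← ofReal_integral_eq_lintegral_ofReal hgmixint (ae_of_all _ hgmix0), hgmix1,
      ENNReal.ofReal_one]
  set M : Measure X := (2 : ENNReal)⁻¹ • (Pdata + Pmix) with hM
  have hMProb : IsProbabilityMeasure M := by
    constructor
    rw [hM]
    rw [Measure.smul_apply, Measure.add_apply, measure_univ, measure_univ,
      one_add_one_eq_two, smul_eq_mul, ENNReal.inv_mul_cancel two_ne_zero ENNReal.ofNat_ne_top]
  have hac1 : Pdata ≪ M := by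
    refine Measure.AbsolutelyContinuous.trans ?_ (Measure.absolutelyContinuous_smul (by simp))
    exact Measure.absolutelyContinuous_of_le (Measure.le_add_right le_rfl)
  have hac2 : Pmix ≪ M := by
    refine Measure.AbsolutelyContinuous.trans ?_ (Measure.absolutelyContinuous_smul (by simp))
    exact Measure.absolutelyContinuous_of_le (Measure.le_add_left le_rfl)
  have hJSD : 0 ≤ JSDiv Pdata Pmix := by
    have h1 := KLdiv_nonneg_aux Pdata M hac1
    have h2 := KLdiv_nonneg_aux Pmix M hac2
    unfold JSDiv
    rw [← hM]
    linarith
  -- bound on JSD_pi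
  have hwle1 : ∀ k, w k ≤ 1 := fun k => by
    calc w k ≤ ∑ j, w j := Finset.single_le_sum (fun j _ => (hw j).le) (Finset.mem_univ k)
    _ = 1 := hw1
  have hlognn : ∀ k, 0 ≤ Real.log (1 / w k) := fun k =>
    Real.log_nonneg (one_le_one_div (hw k) (hwle1 k))
  set S : Set X := {x | 0 < gmix x} with hS
  have hSmeas : MeasurableSet S := measurableSet_lt measurable_const hgmix_meas
  have hterm : ∀ k, (∫ x in S, g k x * Real.log (g k x / gmix x) ∂μ) ≤ Real.log (1 / w k) := by
    intro k
    by_cases hint : IntegrableOn (fun x => g k x * Real.log (g k x / gmix x)) S μ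
    · have hmono : ∀ x ∈ S, g k x * Real.log (g k x / gmix x)
          ≤ g k x * Real.log (1 / w k) := by
        intro x hx
        rcases eq_or_lt_of_le (hg0 k x) with h0 | h0
        · simp [← h0]
        · refine mul_le_mul_of_nonneg_left ?_ (hg0 k x)
          have hgmixpos : 0 < gmix x := hx
          have hle : w k * g k x ≤ gmix x := by
            rw [hgmix]
            exact Finset.single_le_sum
              (fun j _ => mul_nonneg (hw j).le (hg0 j x)) (Finset.mem_univ k)
          refine Real.log_le_log (div_pos h0 hgmixpos) ?_
          rw [div_le_div_iff₀ hgmixpos (hw k)]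
          linarith [hle]
      have hgkS : Integrable (fun x => g k x * Real.log (1 / w k)) (μ.restrict S) :=
        ((hgint k).restrict).mul_const _
      have := setIntegral_mono_on hint hgkS hSmeas hmono
      refine this.trans ?_
      rw [integral_mul_const]
      have hle1 : ∫ x in S, g k x ∂μ ≤ 1 := by
        rw [← hg1 k]
        exact setIntegral_le_integral (hgint k) (ae_of_all _ (hg0 k))
      calc (∫ x in S, g k x ∂μ) * Real.log (1 / w k)
          ≤ 1 * Real.log (1 / w k) :=
            mul_le_mul_of_nonneg_right hle1 (hlognn k)
        _ = Real.log (1 / w k) := one_mul _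
    · rw [integral_undef hint]
      exact hlognn k
  have hsum : (∑ k, w k * ∫ x in S, g k x * Real.log (g k x / gmix x) ∂μ)
      ≤ ∑ k, w k * Real.log (1 / w k) :=
    Finset.sum_le_sum fun k _ => mul_le_mul_of_nonneg_left (hterm k) (hw k).le
  have hbsum := mul_le_mul_of_nonneg_left hsum hbeta
  rw [ge_iff_le, hS] at *
  linarith
end
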